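/- arXiv:1805.05567 — 2 statements merged into one kernel-verified Lean document; each statement's English description precedes it below -/
import Mathlib

section
/- Let H be a complex Hilbert space and let Q be a linear map assigning to each bounded (Borel) measurable function f : ℝ × ℝ → ℂ a bounded linear operator Q(f) on H, such that Q(conj f) = (Q f)* (Q is *-preserving) and Q is continuous when its domain carries the initial topology induced by the functionals f ↦ ∫ f dμ, μ ranging over the finite Borel measures on ℝ × ℝ, and its codomain B(H) carries the weak operator topology. Then for all vectors φ, ψ ∈ H the maps a ↦ ⟨φ, Q(w_{a,0}) ψ⟩ and b ↦ ⟨φ, Q(w_{0,b}) ψ⟩ from ℝ to ℂ are continuous, where w_{a,0}(q,p) = exp(i a q) and w_{0,b}(q,p) = exp(i b p). -/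
open MeasureTheory

noncomputable section

/-- The bounded (Borel) measurable complex-valued functions on the phase space `ℝ × ℝ`,
as a subspace of all functions. -/
def BddMeas : Submodule ℂ ((ℝ × ℝ) → ℂ) where
  carrier := {f | Measurable f ∧ ∃ C : ℝ, ∀ x, ‖f x‖ ≤ C}
  add_mem' := by
    rintro f g ⟨hf, C, hC⟩ ⟨hg, D, hD⟩
    exact ⟨hf.add hg, C + D, fun x =>
      (norm_add_le _ _).trans (add_le_add (hC x) (hD x))⟩
  zero_mem' := ⟨measurable_const, 0, fun x => by simp⟩
  smul_mem' := by
    rintro c f ⟨hf, C, hC⟩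
    exact ⟨hf.const_smul c, ‖c‖ * C, fun x => by
      simpa [norm_smul] using mul_le_mul_of_nonneg_left (hC x) (norm_nonneg c)⟩

/-- Bounded measurable functions are closed under complex conjugation. -/
lemma star_mem_bddMeas {f : (ℝ × ℝ) → ℂ} (hf : f ∈ BddMeas) :
    (fun x => (starRingEnd ℂ) (f x)) ∈ BddMeas := by
  obtain ⟨hm, C, hC⟩ := hf
  exact ⟨(Complex.continuous_conj.measurable).comp hm, C, fun x => by
    simpa [RCLike.norm_conj] using hC x⟩

/-- The classical Weyl unitary `w_{a,b}(q,p) = exp(i (a q + b p))`, as a bounded measurable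
function on phase space. -/
def weylW (a b : ℝ) : BddMeas :=
  ⟨fun x : ℝ × ℝ => Complex.exp (((a * x.1 + b * x.2 : ℝ) : ℂ) * Complex.I),
   ⟨(Complex.continuous_exp.comp
      ((Complex.continuous_ofReal.comp (by fun_prop)).mul continuous_const)).measurable,
    1, fun x => le_of_eq (by exact Complex.norm_exp_ofReal_mul_I _)⟩⟩

/-- The weak* topology on the bounded measurable functions: the initial topology induced by
the integration functionals `f ↦ ∫ f dμ`, `μ` ranging over finite Borel measures on `ℝ × ℝ`. -/
def weakStarTop : TopologicalSpace BddMeas :=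
  ⨅ μ : {μ : Measure (ℝ × ℝ) // IsFiniteMeasure μ},
    TopologicalSpace.induced
      (fun f : BddMeas => ∫ x, (f : (ℝ × ℝ) → ℂ) x ∂μ.1)
      inferInstance

/-- The weak operator topology on `B(H)`: the initial topology induced by the functionals
`T ↦ ⟨φ, T ψ⟩`. -/
def wot (H : Type*) [NormedAddCommGroup H] [InnerProductSpace ℂ H] :
    TopologicalSpace (H →L[ℂ] H) :=
  ⨅ p : H × H,
    TopologicalSpace.induced (fun T : H →L[ℂ] H => (inner ℂ p.1 (T p.2) : ℂ)) inferInstance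

/-! Each integral `∫ w_{a,b} dμ` against a finite measure is, by dominated convergence with the
constant bound `|w_{a,b}| = 1`, continuous in `(a, b)`; so `(a, b) ↦ w_{a,b}` is weak*-continuous,
and composing with `Q` and a matrix coefficient of the weak operator topology gives the claim. -/

open Topology

lemma continuous_inner_apply_wot {H : Type*} [NormedAddCommGroup H] [InnerProductSpace ℂ H]
    (φ ψ : H) : Continuous[wot H, _] fun T : H →L[ℂ] H => (inner ℂ φ (T ψ) : ℂ) :=
  continuous_iInf_dom (i := (φ, ψ)) continuous_induced_dom

lemma continuous_weakStarTop_iff {X : Type*} [TopologicalSpace X] {F : X → BddMeas} :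
    Continuous[_, weakStarTop] F ↔
      ∀ (μ : Measure (ℝ × ℝ)) [IsFiniteMeasure μ],
        Continuous fun t => ∫ x, (F t : (ℝ × ℝ) → ℂ) x ∂μ := by
  rw [weakStarTop, continuous_iInf_rng]
  simp only [continuous_induced_rng, Subtype.forall, Function.comp_def]

lemma continuous_integral_weylW (μ : Measure (ℝ × ℝ)) [IsFiniteMeasure μ] :
    Continuous fun ab : ℝ × ℝ => ∫ x, (weylW ab.1 ab.2 : (ℝ × ℝ) → ℂ) x ∂μ := by
  refine continuous_of_dominated (bound := fun _ => 1) (fun ab => ?_) (fun ab => ?_)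
    (integrable_const 1) (.of_forall fun x => ?_)
  · exact (weylW ab.1 ab.2).2.1.aestronglyMeasurable
  · exact .of_forall fun x => Complex.norm_exp_ofReal_mul_I _ |>.le
  · simp only [weylW]
    fun_prop

lemma continuous_weylW : Continuous[_, weakStarTop] fun ab : ℝ × ℝ => weylW ab.1 ab.2 :=
  continuous_weakStarTop_iff.2 fun μ _ => continuous_integral_weylW μ

theorem weakly_continuous_quantization_regular_general
    {H : Type*} [NormedAddCommGroup H] [InnerProductSpace ℂ H]
    (Q : BddMeas →ₗ[ℂ] (H →L[ℂ] H))
    (hcont : @Continuous _ _ weakStarTop (wot H) ⇑Q)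
    (φ ψ : H) :
    Continuous (fun a : ℝ => (inner ℂ φ ((Q (weylW a 0)) ψ) : ℂ)) ∧
    Continuous (fun b : ℝ => (inner ℂ φ ((Q (weylW 0 b)) ψ) : ℂ)) := by
  have hmatrix : Continuous fun ab : ℝ × ℝ => (inner ℂ φ ((Q (weylW ab.1 ab.2)) ψ) : ℂ) :=
    @Continuous.comp _ _ _ _ (wot H) _ _ _ (continuous_inner_apply_wot φ ψ)
      (@Continuous.comp _ _ _ _ weakStarTop (wot H) _ _ hcont continuous_weylW)
  exact ⟨hmatrix.comp (continuous_id.prodMk continuous_const),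
    hmatrix.comp (continuous_const.prodMk continuous_id)⟩

/-- If a linear, *-preserving quantization map `Q` from the bounded measurable functions on
phase space into `B(H)` is continuous from the weak* topology to the weak operator topology,
then the (identity) representation is regular: `a ↦ ⟨φ, Q(w_{a,0}) ψ⟩` and
`b ↦ ⟨φ, Q(w_{0,b}) ψ⟩` are continuous. -/
theorem weakly_continuous_quantization_regular
    {H : Type*} [NormedAddCommGroup H] [InnerProductSpace ℂ H] [CompleteSpace H]
    (Q : BddMeas →ₗ[ℂ] (H →L[ℂ] H))
    (hstar : ∀ f : BddMeas,
      Q ⟨fun x => (starRingEnd ℂ) ((f : (ℝ × ℝ) → ℂ) x), star_mem_bddMeas f.2⟩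
        = ContinuousLinearMap.adjoint (Q f))
    (hcont : @Continuous _ _ weakStarTop (wot H) ⇑Q)
    (φ ψ : H) :
    Continuous (fun a : ℝ => (inner ℂ φ ((Q (weylW a 0)) ψ) : ℂ)) ∧
    Continuous (fun b : ℝ => (inner ℂ φ ((Q (weylW 0 b)) ψ) : ℂ)) :=
  weakly_continuous_quantization_regular_general Q hcont φ ψ

end
end

section
/- Let H be a complex Hilbert space and let A be a norm-closed unital *-subalgebra of B(H) (a concrete unital C*-algebra acting on H). Then for every state ω on A, every ε > 0, and every finite set F ⊆ A, there exist finitely many unit vectors ψ₁, …, ψₙ ∈ H and nonnegative reals t₁, …, tₙ with Σᵢ tᵢ = 1 such that |ω(x) − Σᵢ tᵢ ⟨ψᵢ, x ψᵢ⟩| < ε for all x ∈ F. -/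
/-!
If the vector `(ω x)_{x ∈ F}` lay outside the closed convex hull of the vectors
`(⟪ψ, x ψ⟫)_{x ∈ F}`, `‖ψ‖ = 1`, a real functional `z ↦ Re ∑ c_x z_x` would separate them:
`Re ⟪ψ, a ψ⟫ < u < Re ω(a)` for `a = ∑ c_x x` and all unit vectors `ψ`. Then `u - Re a` is a
positive operator, hence (by spectral permanence) of the form `b⋆b` with `b ∈ A`, and positivity
of `ω` gives `Re ω(a) ≤ u`, a contradiction.
-/

open scoped ComplexOrder InnerProductSpace ComplexStarModule
open Complex ComplexConjugate

theorem LinearMap.map_star_of_map_star_mul_self_nonneg {A : Type*} [Ring A] [StarRing A]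
    [Algebra ℂ A] [StarModule ℂ A] (ω : A →ₗ[ℂ] ℂ) (hpos : ∀ x, 0 ≤ ω (star x * x)) (x : A) :
    ω (star x) = conj (ω x) := by
  have e₁ : star (1 + x) * (1 + x) = star 1 * 1 + star x * x + (x + star x) := by
    simp only [star_add, star_one, add_mul, mul_add, one_mul, mul_one]; abel
  have e₂ : star (1 + I • x) * (1 + I • x) = star 1 * 1 + star x * x + (I • x - I • star x) := by
    simp only [star_add, star_one, star_smul, add_mul, mul_add, one_mul, mul_one,
      smul_mul_smul_comm, RCLike.star_def, conj_I]
    match_scalars <;> simp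
  have h₁ := hpos (1 + x)
  have h₂ := hpos (1 + I • x)
  rw [e₁] at h₁
  rw [e₂] at h₂
  simp only [map_add, map_sub, map_smul] at h₁ h₂
  have h₀ := hpos 1
  have hx := hpos x
  rw [Complex.le_def] at h₀ h₁ h₂ hx
  simp only [add_im, sub_im, smul_eq_mul, mul_im, I_re, I_im, zero_im, add_re] at h₀ h₁ h₂ hx
  apply Complex.ext <;> simp only [conj_re, conj_im] <;> linarith

theorem LinearMap.apply_eq_re_mul (g : ℂ →ₗ[ℝ] ℝ) (w : ℂ) : g w = ((g 1 - g I * I) * w).re := by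
  have hw : w = w.re • (1 : ℂ) + w.im • I := by simp
  conv_lhs => rw [hw]
  simp only [map_add, map_smul, smul_eq_mul, mul_re, sub_re, sub_im, ofReal_re, ofReal_im,
    I_re, I_im, mul_im]
  ring

theorem LinearMap.exists_apply_eq_re_sum_mul {ι : Type*} [Fintype ι] [DecidableEq ι]
    (f : (ι → ℂ) →ₗ[ℝ] ℝ) : ∃ c : ι → ℂ, ∀ z, f z = (∑ j, c j * z j).re := by
  let g j := f ∘ₗ LinearMap.single ℝ (fun _ => ℂ) j
  refine ⟨fun j => g j 1 - g j I * I, fun z => ?_⟩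
  conv_lhs => rw [← Finset.univ_sum_single z]
  simp only [map_sum, re_sum]
  exact Finset.sum_congr rfl fun j _ => (g j).apply_eq_re_mul (z j)

theorem CStarAlgebra.exists_eq_star_mul_self_of_spectrum_nonneg {A : Type*} [CStarAlgebra A]
    {d : A} (hd : IsSelfAdjoint d) (hspec : ∀ x ∈ spectrum ℝ d, 0 ≤ x) :
    ∃ c : A, d = star c * c := by
  refine ⟨cfc Real.sqrt d, ?_⟩
  rw [(cfc_predicate Real.sqrt d : IsSelfAdjoint _).star_eq, ← cfc_mul Real.sqrt Real.sqrt d]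
  conv_lhs => rw [← cfc_id ℝ d]
  exact cfc_congr fun x hx => (Real.mul_self_sqrt (hspec x hx)).symm

theorem StarSubalgebra.exists_eq_star_mul_self_of_coe_nonneg {B : Type*} [CStarAlgebra B]
    [PartialOrder B] [StarOrderedRing B] (S : StarSubalgebra ℂ B) [IsClosed (S : Set B)]
    {d : S} (hd : 0 ≤ (d : B)) : ∃ c : S, d = star c * c := by
  refine CStarAlgebra.exists_eq_star_mul_self_of_spectrum_nonneg
    (Subtype.ext (IsSelfAdjoint.of_nonneg hd).star_eq) fun x hx => ?_
  have hxB : (x : ℂ) ∈ spectrum ℂ (d : B) := S.spectrum_eq ▸ spectrum.algebraMap_mem ℂ hx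
  exact Complex.zero_le_real.mp (spectrum_nonneg_of_nonneg hd hxB)

namespace ContinuousLinearMap

section RCLike

variable {𝕜 E : Type*} [RCLike 𝕜] [NormedAddCommGroup E] [InnerProductSpace 𝕜 E]

theorem reApplyInnerSelf_le_mul_norm_sq {T : E →L[𝕜] E} {u : ℝ}
    (h : ∀ ψ, ‖ψ‖ = 1 → T.reApplyInnerSelf ψ ≤ u) (ψ : E) :
    T.reApplyInnerSelf ψ ≤ u * ‖ψ‖ ^ 2 := by
  rcases eq_or_ne ψ 0 with rfl | hψ
  · simp [reApplyInnerSelf_apply]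
  have hψ' : ‖ψ‖ ≠ 0 := norm_ne_zero_iff.mpr hψ
  have hunit : ‖((‖ψ‖⁻¹ : ℝ) : 𝕜) • ψ‖ = 1 := by
    rw [norm_smul, RCLike.norm_ofReal, abs_inv, abs_norm, inv_mul_cancel₀ hψ']
  have hscale : ψ = ((‖ψ‖ : ℝ) : 𝕜) • ((‖ψ‖⁻¹ : ℝ) : 𝕜) • ψ := by
    rw [smul_smul, ← RCLike.ofReal_mul, mul_inv_cancel₀ hψ', RCLike.ofReal_one, one_smul]
  conv_lhs => rw [hscale]
  rw [T.reApplyInnerSelf_smul, RCLike.norm_ofReal, abs_norm, mul_comm u]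
  exact mul_le_mul_of_nonneg_left (h _ hunit) (by positivity)

theorem le_algebraMap_of_reApplyInnerSelf_le [CompleteSpace E] {T : E →L[𝕜] E}
    (hT : IsSelfAdjoint T) {u : ℝ} (h : ∀ ψ, ‖ψ‖ = 1 → T.reApplyInnerSelf ψ ≤ u) :
    T ≤ algebraMap 𝕜 (E →L[𝕜] E) u := by
  rw [le_def, isPositive_def']
  refine ⟨(IsSelfAdjoint.algebraMap _ (RCLike.conj_ofReal u)).sub hT, fun ψ => ?_⟩
  have := T.reApplyInnerSelf_le_mul_norm_sq h ψ
  simp only [reApplyInnerSelf_apply, sub_apply, inner_sub_left, map_sub, algebraMap_apply]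
    at this ⊢
  rw [inner_smul_real_left, RCLike.smul_re, inner_self_eq_norm_sq]
  linarith

end RCLike

variable {H : Type*} [NormedAddCommGroup H] [InnerProductSpace ℂ H] [CompleteSpace H]

theorem reApplyInnerSelf_realPart (T : H →L[ℂ] H) (ψ : H) :
    (ℜ T : H →L[ℂ] H).reApplyInnerSelf ψ = T.reApplyInnerSelf ψ := by
  simp only [realPart_apply_coe, reApplyInnerSelf_apply, smul_apply, add_apply, star_eq_adjoint,
    RCLike.real_smul_eq_coe_smul (K := ℂ), inner_smul_real_left, inner_add_left,
    adjoint_inner_left]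
  rw [smul_eq_mul, RCLike.re_ofReal_mul, map_add, inner_re_symm ψ]
  ring

end ContinuousLinearMap

theorem exists_fin_sum_smul_dist_lt_of_mem_closure_convexHull {α E : Type*} [AddCommGroup E]
    [Module ℝ E] [PseudoMetricSpace E] {g : α → E} {s : Set α} {w : E}
    (hw : w ∈ closure (convexHull ℝ (g '' s))) {ε : ℝ} (hε : 0 < ε) :
    ∃ (n : ℕ) (ψ : Fin n → α) (t : Fin n → ℝ), (∀ i, ψ i ∈ s) ∧ (∀ i, 0 ≤ t i) ∧
      ∑ i, t i = 1 ∧ dist w (∑ i, t i • g (ψ i)) < ε := by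
  obtain ⟨y, hy, hwy⟩ := Metric.mem_closure_iff.mp hw ε hε
  obtain ⟨ι, _, t, z, ht₀, ht₁, hz, rfl⟩ := mem_convexHull_iff_exists_fintype.mp hy
  choose ψ hψ hgψ using hz
  let e := (Fintype.equivFin ι).symm
  refine ⟨Fintype.card ι, ψ ∘ e, t ∘ e, fun i => hψ _, fun i => ht₀ _, ?_, ?_⟩
  · rwa [Function.comp_def, e.sum_comp t]
  · simpa only [Function.comp_apply, hgψ, e.sum_comp fun i => t i • z i] using hwy

theorem StarSubalgebra.mem_closure_convexHull_vectorStates {H ι : Type*} [NormedAddCommGroup H]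
    [InnerProductSpace ℂ H] [CompleteSpace H] [Fintype ι]
    (S : StarSubalgebra ℂ (H →L[ℂ] H)) [IsClosed (S : Set (H →L[ℂ] H))]
    (ω : S →ₗ[ℂ] ℂ) (hone : ω 1 = 1) (hpos : ∀ x, 0 ≤ ω (star x * x)) (x : ι → S) :
    (fun i => ω (x i)) ∈ closure (convexHull ℝ
      ((fun ψ i => ⟪ψ, (x i : H →L[ℂ] H) ψ⟫_ℂ) '' Metric.sphere (0 : H) 1)) := by
  classical
  by_contra hω
  obtain ⟨f, u, hf, hfω⟩ :=
    geometric_hahn_banach_closed_point (convex_convexHull ℝ _).closure isClosed_closure hω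
  obtain ⟨c, hc⟩ := (f : (ι → ℂ) →ₗ[ℝ] ℝ).exists_apply_eq_re_sum_mul
  simp only [ContinuousLinearMap.coe_coe] at hc
  set a : S := ∑ i, c i • x i
  have ha_inner (ψ : H) :
      ⟪ψ, (a : H →L[ℂ] H) ψ⟫_ℂ = ∑ i, c i * ⟪ψ, (x i : H →L[ℂ] H) ψ⟫_ℂ := by
    simp [a]
  have ha_sphere (ψ : H) (hψ : ‖ψ‖ = 1) : (a : H →L[ℂ] H).reApplyInnerSelf ψ ≤ u := by
    have := hf _ (subset_closure (subset_convexHull ℝ _ ⟨ψ, by simpa using hψ, rfl⟩))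
    rw [hc, ← ha_inner] at this
    rw [ContinuousLinearMap.reApplyInnerSelf_apply, inner_re_symm]
    exact this.le
  have ha_ω : u < (ω a).re := by simpa [hc, a, map_sum] using hfω
  have hd : 0 ≤ ((algebraMap ℂ S u - ℜ a : S) : H →L[ℂ] H) := by
    rw [← S.subtype_apply, map_sub, AlgHomClass.commutes, map_realPart, sub_nonneg]
    refine ContinuousLinearMap.le_algebraMap_of_reApplyInnerSelf_le (ℜ (a : H →L[ℂ] H)).2
      fun ψ hψ => ?_
    rw [ContinuousLinearMap.reApplyInnerSelf_realPart]
    exact ha_sphere ψ hψ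
  have hω_realPart : ω (ℜ a : S) = (ω a).re := by
    rw [realPart_apply_coe, LinearMap.map_smul_of_tower, map_add,
      ω.map_star_of_map_star_mul_self_nonneg hpos, Complex.add_conj, Complex.real_smul]
    push_cast
    ring
  obtain ⟨b, hb⟩ := S.exists_eq_star_mul_self_of_coe_nonneg hd
  have hωb := hpos b
  rw [← hb, map_sub, Algebra.algebraMap_eq_smul_one, map_smul, hone, smul_eq_mul, mul_one,
    hω_realPart, ← Complex.ofReal_sub, Complex.zero_le_real] at hωb
  linarith

theorem vector_states_weakStar_dense_concrete_Cstar_general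
    {H : Type*} [NormedAddCommGroup H] [InnerProductSpace ℂ H] [CompleteSpace H]
    (A : StarSubalgebra ℂ (H →L[ℂ] H))
    (hA : IsClosed (A : Set (H →L[ℂ] H)))
    (ω : A → ℂ)
    (hadd : ∀ x y : A, ω (x + y) = ω x + ω y)
    (hsmul : ∀ (c : ℂ) (x : A), ω (c • x) = c * ω x)
    (hone : ω 1 = 1)
    (hpos : ∀ x : A, 0 ≤ ω (star x * x))
    (ε : ℝ) (hε : 0 < ε) (F : Finset A) :
    ∃ (n : ℕ) (ψ : Fin n → H) (t : Fin n → ℝ),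
      (∀ i, ‖ψ i‖ = 1) ∧ (∀ i, 0 ≤ t i) ∧ (∑ i, t i) = 1 ∧
      ∀ x ∈ F,
        ‖ω x - ∑ i, (t i : ℂ) *
          (inner ℂ (ψ i) ((x : H →L[ℂ] H) (ψ i)) : ℂ)‖ < ε := by
  let Ω : A →ₗ[ℂ] ℂ := { toFun := ω, map_add' := hadd, map_smul' := hsmul }
  obtain ⟨n, ψ, t, hψ, ht₀, ht₁, hdist⟩ := exists_fin_sum_smul_dist_lt_of_mem_closure_convexHull
    (A.mem_closure_convexHull_vectorStates Ω hone hpos (Subtype.val : F → A)) hε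
  refine ⟨n, ψ, t, fun i => by simpa using hψ i, ht₀, ht₁, fun x hx => ?_⟩
  rw [dist_eq_norm] at hdist
  simpa [Finset.sum_apply, Complex.real_smul, Ω] using (norm_le_pi_norm _ ⟨x, hx⟩).trans_lt hdist

/-- Every state on a norm-closed unital *-subalgebra `A` of `B(H)` is approximated,
uniformly on finite sets of elements of `A`, by convex combinations of vector states of `H`
restricted to `A`. -/
theorem vector_states_weakStar_dense_concrete_Cstar
    {H : Type*} [NormedAddCommGroup H] [InnerProductSpace ℂ H] [CompleteSpace H]
    (A : StarSubalgebra ℂ (H →L[ℂ] H))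
    (hA : IsClosed (A : Set (H →L[ℂ] H)))
    (ω : A → ℂ)
    (hadd : ∀ x y : A, ω (x + y) = ω x + ω y)
    (hsmul : ∀ (c : ℂ) (x : A), ω (c • x) = c * ω x)
    (hcont : Continuous ω)
    (hone : ω 1 = 1)
    (hpos : ∀ x : A, 0 ≤ ω (star x * x))
    (ε : ℝ) (hε : 0 < ε) (F : Finset A) :
    ∃ (n : ℕ) (ψ : Fin n → H) (t : Fin n → ℝ),
      (∀ i, ‖ψ i‖ = 1) ∧ (∀ i, 0 ≤ t i) ∧ (∑ i, t i) = 1 ∧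
      ∀ x ∈ F,
        ‖ω x - ∑ i, (t i : ℂ) *
          (inner ℂ (ψ i) ((x : H →L[ℂ] H) (ψ i)) : ℂ)‖ < ε :=
  vector_states_weakStar_dense_concrete_Cstar_general A hA ω hadd hsmul hone hpos ε hε F
end
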